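/- Let ∂ be a generator with hull operator [·], and let μ, ψ ∈ N. Then the restriction of μ to [μ]^c equals ψ if and only if the restriction of μ to [ψ]^c equals ψ; and in this case [μ] = [ψ]. -/

import Mathlib

/-- The Dirac counting measure at a point, in the model of counting measures
on `X` as functions `X → ℕ` (pointwise order and addition). -/
noncomputable def delta {X : Type*} (x : X) : X → ℕ := Set.indicator {x} 1

/-- A generator: a map on counting measures satisfying (H1) thinning, (H2) additivity,
(H3) idempotency and (H4) consistency. -/
def IsGenerator {X : Type*} (D : (X → ℕ) → (X → ℕ)) : Prop :=
  (∀ μ, D μ ≤ μ) ∧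
  (∀ μ x, D μ x ≠ 0 → D (μ + delta x) = D μ + delta x) ∧
  (∀ μ μ' : X → ℕ, μ' ≤ μ - D μ → D (D μ + μ') = D μ) ∧
  (∀ μ μ' ψ : X → ℕ, μ' ≤ μ → D μ = D μ' → D (μ + ψ) = D (μ' + ψ))

/-- The hull operator associated with a generator. -/
def hull {X : Type*} (D : (X → ℕ) → (X → ℕ)) (μ : X → ℕ) : Set X :=
  {x | D (μ + delta x) = D μ}

open scoped Classical

/-- The indicator `H_x(μ) = 1{∂(μ + δ_x) ≠ ∂μ}`, as a real number. -/
noncomputable def Hf {X : Type*} (D : (X → ℕ) → (X → ℕ)) (x : X) (μ : X → ℕ) : ℝ :=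
  if D (μ + delta x) = D μ then 0 else 1

/-! A fixed point `ψ = ∂ψ` lying between `∂μ` and `μ` must equal `∂μ` by (H3); and (H4) makes
the hull monotone, which is what puts `ψ = μ_{[ψ]ᶜ}` between `∂μ = μ_{[μ]ᶜ}` and `μ`. -/

lemma delta_self {X : Type*} (x : X) : delta x x = 1 := by
  simp [delta]

lemma delta_le {X : Type*} {x : X} {ν : X → ℕ} (hx : ν x ≠ 0) : delta x ≤ ν := by
  intro y
  by_cases hy : y = x
  · subst hy
    rw [delta_self]
    exact Nat.one_le_iff_ne_zero.mpr hx
  · simp [delta, hy]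

namespace IsGenerator

variable {X : Type*} {D : (X → ℕ) → (X → ℕ)}

lemma idem (hD : IsGenerator D) (μ : X → ℕ) : D (D μ) = D μ := by
  simpa using hD.2.2.1 μ 0 fun _ => Nat.zero_le _

lemma apply_add (hD : IsGenerator D) (μ ψ : X → ℕ) : D (μ + ψ) = D (D μ + ψ) :=
  hD.2.2.2 μ (D μ) ψ (hD.1 μ) (hD.idem μ).symm

lemma apply_of_mem_hull (hD : IsGenerator D) {μ : X → ℕ} {x : X} (hx : x ∈ hull D μ) :
    D μ x = 0 := by
  by_contra h
  have hsucc := congrFun ((hD.2.1 μ x h).symm.trans hx) x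
  simp [delta_self] at hsucc

lemma apply_of_notMem_hull (hD : IsGenerator D) {μ : X → ℕ} {x : X} (hx : x ∉ hull D μ) :
    D μ x = μ x := by
  refine le_antisymm (hD.1 μ x) (not_lt.mp fun hlt => hx ?_)
  have hδ : delta x ≤ μ - D μ := delta_le (by simp only [Pi.sub_apply]; omega)
  exact (hD.apply_add μ (delta x)).trans (hD.2.2.1 μ (delta x) hδ)

lemma eq_indicator (hD : IsGenerator D) (μ : X → ℕ) : D μ = (hull D μ)ᶜ.indicator μ := by
  funext x
  by_cases hx : x ∈ hull D μ
  · simp [hx, hD.apply_of_mem_hull hx]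
  · simp [hx, hD.apply_of_notMem_hull hx]

lemma hull_apply (hD : IsGenerator D) (μ : X → ℕ) : hull D (D μ) = hull D μ := by
  ext x
  simp only [hull, Set.mem_ofPred_eq, ← hD.apply_add, hD.idem]

lemma hull_mono (hD : IsGenerator D) {ψ μ : X → ℕ} (hψμ : ψ ≤ μ) :
    hull D ψ ⊆ hull D μ := by
  intro x hx
  have h := hD.2.2.2 (ψ + delta x) ψ (μ - ψ) le_self_add hx
  rwa [add_right_comm, add_tsub_cancel_of_le hψμ] at h

lemma apply_eq_of_le_of_le (hD : IsGenerator D) {μ ψ : X → ℕ} (hlow : D μ ≤ ψ)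
    (hup : ψ ≤ μ) : D ψ = D μ := by
  have h := hD.2.2.1 μ (ψ - D μ) (tsub_le_tsub_right hup _)
  rwa [add_tsub_cancel_of_le hlow] at h

lemma apply_eq_of_indicator_hull_compl_eq (hD : IsGenerator D) {μ ψ : X → ℕ}
    (h : (hull D ψ)ᶜ.indicator μ = ψ) :
    D μ = ψ := by
  have hup : ψ ≤ μ := h ▸ Set.indicator_le_self _ μ
  have hfix : D ψ = ψ := by
    rw [hD.eq_indicator ψ]
    nth_rw 2 [← h]
    rw [Set.indicator_indicator, Set.inter_self, h]
  have hlow : D μ ≤ ψ := by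
    rw [hD.eq_indicator, ← h]
    exact Set.indicator_le_indicator_of_subset
      (Set.compl_subset_compl.mpr (hD.hull_mono hup)) fun _ => Nat.zero_le _
  rw [← hD.apply_eq_of_le_of_le hlow hup, hfix]

end IsGenerator

/-- For a generator `D` and `μ, ψ`, the restriction of `μ` to `[μ]ᶜ`
equals `ψ` iff the restriction of `μ` to `[ψ]ᶜ` equals `ψ`; and then `[μ] = [ψ]`. -/
theorem restrict_hull_compl_iff {X : Type*} (D : (X → ℕ) → (X → ℕ))
    (hD : IsGenerator D) (μ ψ : X → ℕ) :
    ((hull D μ)ᶜ.indicator μ = ψ ↔ (hull D ψ)ᶜ.indicator μ = ψ) ∧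
      ((hull D μ)ᶜ.indicator μ = ψ → hull D μ = hull D ψ) := by
  have hull_eq : (hull D μ)ᶜ.indicator μ = ψ → hull D μ = hull D ψ := by
    rintro rfl
    rw [← hD.eq_indicator, hD.hull_apply]
  refine ⟨⟨fun h => hull_eq h ▸ h, fun h => ?_⟩, hull_eq⟩
  rw [← hD.eq_indicator]
  exact hD.apply_eq_of_indicator_hull_compl_eq h
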